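/- A point X lies on the incircle of triangle ABC if and only if X K Xᵀ − 2 I K Xᵀ + (1/2) I K Iᵀ = 0, where I is the incenter and K = diag(S_A, S_B, S_C), in normalized barycentric coordinates. -/

import Mathlib

open scoped RealInnerProductSpace

noncomputable section

abbrev Pt := EuclideanSpace ℝ (Fin 2)

/-- Signed area of triangle XYZ in the plane. -/
def sArea (X Y Z : Pt) : ℝ :=
  ((Y 0 - X 0) * (Z 1 - X 1) - (Z 0 - X 0) * (Y 1 - X 1)) / 2

/-- Conway symbol: `conwayA A B C = S_A = (b^2 + c^2 - a^2)/2`. -/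
def conwayA (X Y Z : Pt) : ℝ :=
  (dist Z X ^ 2 + dist X Y ^ 2 - dist Y Z ^ 2) / 2

/-- The bilinear form given by the metric matrix K = diag (S_A, S_B, S_C). -/
def Kf (A B C : Pt) (u v : Fin 3 → ℝ) : ℝ :=
  conwayA A B C * u 0 * v 0 + conwayA B C A * u 1 * v 1 + conwayA C A B * u 2 * v 2

/-- The point with (normalized) barycentric coordinates `u` w.r.t. A, B, C. -/
def bary (A B C : Pt) (u : Fin 3 → ℝ) : Pt :=
  u 0 • A + u 1 • B + u 2 • C

/-!
Since `K` is the metric matrix of barycentric coordinates, `|XI|² = K(X,X) - 2 K(I,X) + K(I,I)`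
for normalized `X` and `I`. For the incenter, Heron's formula gives `K(I,I) = 2 r²`, so
`|XI|² - r² = K(X,X) - 2 K(I,X) + K(I,I) / 2`.
-/

lemma dist_sq_eq_coords (P Q : Pt) : dist P Q ^ 2 = (P 0 - Q 0) ^ 2 + (P 1 - Q 1) ^ 2 := by
  rw [EuclideanSpace.dist_eq, Real.sq_sqrt (by positivity)]
  simp [Fin.sum_univ_two, Real.dist_eq, sq_abs]

lemma bary_apply (A B C : Pt) (u : Fin 3 → ℝ) (i : Fin 2) :
    bary A B C u i = u 0 * A i + u 1 * B i + u 2 * C i := by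
  simp [bary]

lemma Kf_comm (A B C : Pt) (u v : Fin 3 → ℝ) : Kf A B C u v = Kf A B C v u := by
  simp only [Kf]
  ring

lemma dist_bary_sq (A B C : Pt) (u v : Fin 3 → ℝ)
    (hu : u 0 + u 1 + u 2 = 1) (hv : v 0 + v 1 + v 2 = 1) :
    dist (bary A B C u) (bary A B C v) ^ 2 =
      Kf A B C u u - 2 * Kf A B C u v + Kf A B C v v := by
  have hu2 : u 2 = 1 - u 0 - u 1 := by linarith
  have hv2 : v 2 = 1 - v 0 - v 1 := by linarith
  simp only [dist_sq_eq_coords, bary_apply, Kf, conwayA, hu2, hv2]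
  ring

lemma sixteen_mul_sArea_sq (A B C : Pt) :
    16 * sArea A B C ^ 2 =
      2 * dist B C ^ 2 * dist C A ^ 2 + 2 * dist C A ^ 2 * dist A B ^ 2
        + 2 * dist A B ^ 2 * dist B C ^ 2
        - (dist B C ^ 2) ^ 2 - (dist C A ^ 2) ^ 2 - (dist A B ^ 2) ^ 2 := by
  simp only [dist_sq_eq_coords, sArea]
  ring

lemma Kf_incenter_self (A B C : Pt) (a b c p : ℝ) (ha : a = dist B C) (hb : b = dist C A)
    (hc : c = dist A B) (hp : p = (a + b + c) / 2) (hp0 : p ≠ 0) :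
    Kf A B C ![a / (2 * p), b / (2 * p), c / (2 * p)] ![a / (2 * p), b / (2 * p), c / (2 * p)]
      = 2 * (sArea A B C / p) ^ 2 := by
  have heron := sixteen_mul_sArea_sq A B C
  simp only [Kf, conwayA, Matrix.cons_val_zero, Matrix.cons_val_one, Matrix.cons_val_two,
    Matrix.head_cons, Matrix.tail_cons, ← ha, ← hb, ← hc] at heron ⊢
  field_simp
  subst hp
  linear_combination -heron

theorem stmt16 (A B C : Pt) (h : sArea A B C ≠ 0)
    (a b c S p r : ℝ) (ha : a = dist B C) (hb : b = dist C A) (hc : c = dist A B)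
    (hS : S = |sArea A B C|) (hp : p = (a + b + c) / 2) (hr : r = S / p)
    (Ib : Fin 3 → ℝ) (hIb : Ib = ![a / (2 * p), b / (2 * p), c / (2 * p)])
    (Ipt : Pt) (hIpt : Ipt = bary A B C Ib)
    (X : Fin 3 → ℝ) (Xpt : Pt) (hX1 : X 0 + X 1 + X 2 = 1)
    (hXpt : Xpt = bary A B C X) :
    dist Xpt Ipt = r ↔
      Kf A B C X X - 2 * Kf A B C Ib X + (1 / 2) * Kf A B C Ib Ib = 0 := by
  have hBC : B ≠ C := by
    rintro rfl
    simp [sArea] at h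
  have hp0 : 0 < p := by
    have : 0 < a := ha ▸ dist_pos.mpr hBC
    rw [hp, hb, hc]
    linarith [dist_nonneg (x := C) (y := A), dist_nonneg (x := A) (y := B)]
  have hIb1 : Ib 0 + Ib 1 + Ib 2 = 1 := by
    simp only [hIb, Matrix.cons_val_zero, Matrix.cons_val_one, Matrix.cons_val_two,
      Matrix.head_cons, Matrix.tail_cons]
    field_simp
    linarith
  have hKII : Kf A B C Ib Ib = 2 * r ^ 2 := by
    rw [hIb, Kf_incenter_self A B C a b c p ha hb hc hp hp0.ne', hr, hS, div_pow, div_pow,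
      sq_abs]
  have hdist : dist Xpt Ipt ^ 2 = Kf A B C X X - 2 * Kf A B C Ib X + Kf A B C Ib Ib := by
    rw [hXpt, hIpt, dist_bary_sq A B C X Ib hX1 hIb1, Kf_comm A B C X Ib]
  have hr0 : 0 ≤ r := hr ▸ div_nonneg (hS ▸ abs_nonneg _) hp0.le
  rw [← sq_eq_sq₀ dist_nonneg hr0, hdist, hKII]
  constructor <;> intro <;> linarith
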